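/- Let φ(·;τ) be holomorphic on ℂ satisfying φ(z + λτ + μ;τ) = e(−M(λ²τ + 2λz))φ(z;τ) for all λ, μ ∈ ℤ, with M ∈ ℕ, M ≥ 1. Then φ admits the theta decomposition φ(z;τ) = Σ_{ℓ mod 2M} h_ℓ(τ) θ_{M,ℓ}(z;τ), where h_ℓ(τ) := q^{−ℓ²/(4M)} ∫₀¹ φ(x;τ)e(−ℓx)dx and θ_{M,ℓ}(z;τ) := Σ_{λ ≡ ℓ (2M)} q^{λ²/(4M)} e(λz). -/

import Mathlib

/-!
Since `φ(z + 1) = φ(z)`, `φ` is the sum of its Fourier series `Σ_k c_k e(kz)` with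
`c_k = ∫₀¹ φ(x) e(-kx) dx`. By Cauchy's theorem `c_k` may be computed on any horizontal line,
which gives decay `c_k = O(e^{-2π|k|})` and hence absolute convergence everywhere. Computing
`c_{ℓ+2Mn}` on the line shifted by `-nτ` and applying the elliptic law there gives
`c_{ℓ+2Mn} = q^{ℓn + Mn²} c_ℓ = q^{((ℓ+2Mn)² - ℓ²)/(4M)} c_ℓ`, so grouping the Fourier series by
the residue of `k` modulo `2M` yields exactly `Σ_ℓ h_ℓ θ_{M,ℓ}`.
-/

noncomputable section

/-- `e(w) := exp(2πiw)`. -/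
def ee (w : ℂ) : ℂ := Complex.exp (2 * (Real.pi : ℂ) * Complex.I * w)

/-- The summand of `θ_{M,ℓ}(z;τ)`, parametrizing `λ = ℓ + 2Mn`, `n ∈ ℤ`. -/
def thetaTerm (M : ℕ) (ℓ : ℤ) (z τ : ℂ) (n : ℤ) : ℂ :=
  ee (((ℓ + 2 * (M : ℤ) * n : ℤ) : ℂ) ^ 2 * τ / (4 * (M : ℂ)))
    * ee (((ℓ + 2 * (M : ℤ) * n : ℤ) : ℂ) * z)

/-- The level `M` theta function `θ_{M,ℓ}(z;τ) = Σ_{λ ≡ ℓ (2M)} q^{λ²/(4M)} e(λz)`. -/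
def theta (M : ℕ) (ℓ : ℤ) (z τ : ℂ) : ℂ := ∑' n : ℤ, thetaTerm M ℓ z τ n

/-- The Fourier coefficient `h_ℓ(τ) = q^{−ℓ²/(4M)} ∫₀¹ φ(x;τ) e(−ℓx) dx`. -/
def fourierCoeff' (M : ℕ) (φ : ℂ → ℂ) (τ : ℂ) (ℓ : ℤ) : ℂ :=
  ee (-(ℓ : ℂ) ^ 2 * τ / (4 * (M : ℂ))) * ∫ x in (0 : ℝ)..1, φ (x : ℂ) * ee (-(ℓ : ℂ) * (x : ℂ))

open Complex intervalIntegral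

lemma ee_add (a b : ℂ) : ee (a + b) = ee a * ee b := by
  rw [ee, ee, ee, ← Complex.exp_add]; ring_nf

@[simp] lemma ee_zero : ee 0 = 1 := by simp [ee]

lemma ee_intCast (n : ℤ) : ee n = 1 := by
  rw [ee, ← Complex.exp_int_mul_two_pi_mul_I n]; ring_nf

lemma norm_ee (w : ℂ) : ‖ee w‖ = Real.exp (2 * Real.pi * -w.im) := by
  simp [ee, Complex.norm_exp, Complex.mul_re]

lemma differentiable_ee : Differentiable ℂ ee :=
  Complex.differentiable_exp.comp (differentiable_id.const_mul _)

section ContourShift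

variable {g : ℂ → ℂ}

lemma integral_add_mul_I_eq_of_periodic (hg : Differentiable ℂ g) (hper : Function.Periodic g 1)
    (y : ℝ) : ∫ t in (0 : ℝ)..1, g (t + y * I) = ∫ t in (0 : ℝ)..1, g t := by
  have hrect := integral_boundary_rect_eq_zero_of_differentiableOn g 0 (1 + y * I)
    hg.differentiableOn
  have hsides : ∫ s in (0 : ℝ)..y, g (1 + s * I) = ∫ s in (0 : ℝ)..y, g (s * I) :=
    integral_congr fun s _ ↦ by simpa [add_comm] using hper (s * I)
  simp only [zero_re, zero_im, add_re, one_re, mul_re, ofReal_re, I_re, ofReal_im, I_im,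
    add_im, one_im, mul_im] at hrect
  norm_num [hsides] at hrect
  linear_combination -hrect

lemma integral_comp_add_eq_of_periodic (hg : Differentiable ℂ g) (hper : Function.Periodic g 1)
    (a : ℂ) : ∫ t in (0 : ℝ)..1, g (a + t) = ∫ t in (0 : ℝ)..1, g t := by
  have hline : Function.Periodic (fun s : ℝ ↦ g (s + a.im * I)) 1 := fun s ↦ by
    simpa [add_right_comm] using hper (s + a.im * I)
  calc ∫ t in (0 : ℝ)..1, g (a + t)
      = ∫ t in (0 : ℝ)..1, (fun s : ℝ ↦ g (s + a.im * I)) (t + a.re) :=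
        integral_congr fun t _ ↦ by
          simp only [ofReal_add]; congr 1; linear_combination -re_add_im a
    _ = ∫ t in (0 : ℝ)..1, g (t + a.im * I) := by
        rw [integral_comp_add_right (fun s : ℝ ↦ g (s + a.im * I))]
        simpa [add_comm] using hline.intervalIntegral_add_eq (0 + a.re) 0
    _ = ∫ t in (0 : ℝ)..1, g t := integral_add_mul_I_eq_of_periodic hg hper a.im

end ContourShift

def unitFourierCoeff (φ : ℂ → ℂ) (k : ℤ) : ℂ := ∫ x in (0 : ℝ)..1, φ x * ee (-k * x)

section UnitFourierCoeff

variable {φ : ℂ → ℂ}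

lemma unitFourierCoeff_eq_integral_comp_add (hφ : Differentiable ℂ φ)
    (hper : Function.Periodic φ 1) (k : ℤ) (a : ℂ) :
    unitFourierCoeff φ k = ∫ t in (0 : ℝ)..1, φ (a + t) * ee (-k * (a + t)) := by
  have hg : Function.Periodic (fun w ↦ φ w * ee (-k * w)) 1 := fun w ↦ by
    simp only [hper w, mul_add, ee_add, mul_one, ← Int.cast_neg, ee_intCast]
  refine (integral_comp_add_eq_of_periodic ?_ hg a).symm
  exact hφ.mul (differentiable_ee.comp (differentiable_id.const_mul _))

lemma unitFourierCoeff_comp_add (hφ : Differentiable ℂ φ) (hper : Function.Periodic φ 1)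
    (k : ℤ) (a : ℂ) :
    unitFourierCoeff (fun w ↦ φ (w + a)) k = ee (k * a) * unitFourierCoeff φ k := by
  rw [unitFourierCoeff_eq_integral_comp_add hφ hper k a, unitFourierCoeff,
    ← integral_const_mul]
  refine integral_congr fun t _ ↦ ?_
  have hcancel : ee (k * a) * ee (-k * a) = 1 := by rw [← ee_add]; ring_nf; exact ee_zero
  rw [add_comm a, mul_add, ee_add]
  linear_combination (-(φ (t + a) * ee (-k * t))) * hcancel

lemma norm_unitFourierCoeff_le (hφ : Differentiable ℂ φ) (hper : Function.Periodic φ 1)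
    {C s : ℝ} (hC : ∀ w, ‖w‖ ≤ 1 + |s| → ‖φ w‖ ≤ C) (k : ℤ) :
    ‖unitFourierCoeff φ k‖ ≤ C * Real.exp (2 * Real.pi * (k * s)) := by
  rw [unitFourierCoeff_eq_integral_comp_add hφ hper k (s * I)]
  refine (norm_integral_le_of_norm_le_const (C := C * Real.exp (2 * Real.pi * (k * s)))
    fun t ht ↦ ?_).trans_eq (by norm_num)
  rw [Set.uIoc_of_le zero_le_one] at ht
  have him : (-k * (s * I + t)).im = -(k * s) := by simp
  rw [norm_mul, norm_ee, him, neg_neg]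
  refine mul_le_mul_of_nonneg_right (hC _ ?_) (Real.exp_nonneg _)
  calc ‖s * I + t‖ ≤ ‖(s : ℂ) * I‖ + ‖(t : ℂ)‖ := norm_add_le _ _
    _ ≤ 1 + |s| := by simp [abs_of_pos ht.1]; linarith [ht.2]

lemma summable_norm_unitFourierCoeff (hφ : Differentiable ℂ φ) (hper : Function.Periodic φ 1) :
    Summable fun k ↦ ‖unitFourierCoeff φ k‖ := by
  obtain ⟨C, hC⟩ := (isCompact_closedBall (0 : ℂ) 2).exists_bound_of_continuousOn
    hφ.continuous.continuousOn
  have hC' : ∀ s : ℝ, |s| = 1 → ∀ w, ‖w‖ ≤ 1 + |s| → ‖φ w‖ ≤ C := fun s hs w hw ↦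
    hC w (by rw [mem_closedBall_zero_iff]; linarith)
  have hr : Real.exp (-(2 * Real.pi)) < 1 := Real.exp_lt_one_iff.mpr (by linarith [Real.pi_pos])
  have hgeom : Summable fun n : ℕ ↦ C * Real.exp (-(2 * Real.pi)) ^ n :=
    (summable_geometric_of_lt_one (Real.exp_nonneg _) hr).mul_left C
  refine Summable.of_nonneg_of_le (fun _ ↦ norm_nonneg _) (fun k ↦ ?_)
    (Summable.of_nat_of_neg (f := fun k : ℤ ↦ C * Real.exp (-(2 * Real.pi)) ^ k.natAbs)
      (by simpa using hgeom) (by simpa using hgeom))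
  rw [← Real.exp_nat_mul]
  rcases le_or_gt 0 k with hk | hk
  · refine (norm_unitFourierCoeff_le hφ hper (hC' (-1) (by simp)) k).trans_eq ?_
    rw [Nat.cast_natAbs, Int.cast_abs, abs_of_nonneg (Int.cast_nonneg_iff.mpr hk)]; ring_nf
  · refine (norm_unitFourierCoeff_le hφ hper (hC' 1 (by simp)) k).trans_eq ?_
    rw [Nat.cast_natAbs, Int.cast_abs, abs_of_neg (Int.cast_lt_zero.mpr hk)]; ring_nf

lemma fourier_coe_eq_ee (k : ℤ) (x : ℝ) : fourier k (x : AddCircle (1 : ℝ)) = ee (k * x) := by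
  rw [fourier_coe_apply, ee]; push_cast; ring_nf

lemma hasSum_unitFourierCoeff_ofReal (hφ : Differentiable ℂ φ) (hper : Function.Periodic φ 1)
    (x : ℝ) : HasSum (fun k : ℤ ↦ unitFourierCoeff φ k * ee (k * x)) (φ x) := by
  have : Fact (0 < (1 : ℝ)) := ⟨one_pos⟩
  have hperR : Function.Periodic (fun t : ℝ ↦ φ t) 1 := fun t ↦ by simpa using hper t
  let F : C(AddCircle (1 : ℝ), ℂ) :=
    ⟨hperR.lift, (hφ.continuous.comp continuous_ofReal).quotient_liftOn' _⟩
  have hcoeff : fourierCoeff F = unitFourierCoeff φ := funext fun k ↦ by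
    rw [fourierCoeff_eq_intervalIntegral _ k 0, unitFourierCoeff]
    simp only [zero_add, div_one, one_smul]
    refine integral_congr fun t _ ↦ ?_
    change fourier (-k) (t : AddCircle (1 : ℝ)) * hperR.lift t = _
    rw [fourier_coe_eq_ee, hperR.lift_coe, mul_comm]
    push_cast; rfl
  have hsum : Summable (fourierCoeff F) :=
    hcoeff ▸ (summable_norm_unitFourierCoeff hφ hper).of_norm
  have h := has_pointwise_sum_fourier_series_of_summable hsum x
  rw [hcoeff, show F x = φ x from hperR.lift_coe x] at h
  simpa only [smul_eq_mul, fourier_coe_eq_ee] using h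

lemma hasSum_unitFourierCoeff (hφ : Differentiable ℂ φ) (hper : Function.Periodic φ 1) (z : ℂ) :
    HasSum (fun k : ℤ ↦ unitFourierCoeff φ k * ee (k * z)) (φ z) := by
  have hψ : Differentiable ℂ fun w ↦ φ (w + z.im * I) := hφ.comp (differentiable_id.add_const _)
  have hperψ : Function.Periodic (fun w ↦ φ (w + z.im * I)) 1 := fun w ↦ by
    simpa [add_right_comm] using hper (w + z.im * I)
  have h := hasSum_unitFourierCoeff_ofReal hψ hperψ z.re
  simp only [unitFourierCoeff_comp_add hφ hper, re_add_im] at h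
  convert h using 2 with k
  rw [mul_comm (ee _), mul_assoc, ← ee_add, ← mul_add, add_comm, re_add_im]

end UnitFourierCoeff

lemma Summable.tsum_eq_sum_range_tsum_add_mul {E : Type*} [NormedAddCommGroup E] [CompleteSpace E]
    {f : ℤ → E} (hf : Summable f) {m : ℕ} (hm : m ≠ 0) :
    ∑' k, f k = ∑ r ∈ Finset.range m, ∑' n : ℤ, f (r + m * n) := by
  have : NeZero m := ⟨hm⟩
  let e : Fin m × ℤ ≃ ℤ := (Equiv.prodComm _ _).trans (Int.divModEquiv m).symm
  have he : ∀ p, e p = p.1 + m * p.2 := fun p ↦ by simp [e, add_comm, mul_comm]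
  have hfe : Summable fun p ↦ f (e p) := e.summable_iff.mpr hf
  rw [← e.tsum_eq, hfe.tsum_prod, tsum_fintype,
    ← Fin.sum_univ_eq_sum_range (fun r ↦ ∑' n : ℤ, f (r + m * n))]
  simp only [he]

def IsEllipticOfIndex (M : ℕ) (τ : ℂ) (φ : ℂ → ℂ) : Prop :=
  ∀ (lam mu : ℤ) (z : ℂ),
    φ (z + (lam : ℂ) * τ + (mu : ℂ)) = ee (-(M : ℂ) * ((lam : ℂ) ^ 2 * τ + 2 * (lam : ℂ) * z)) * φ z

namespace IsEllipticOfIndex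

variable {M : ℕ} {τ : ℂ} {φ : ℂ → ℂ}

lemma periodic (hell : IsEllipticOfIndex M τ φ) : Function.Periodic φ 1 := fun w ↦ by
  simpa using hell 0 1 w

lemma unitFourierCoeff_add_mul (hell : IsEllipticOfIndex M τ φ) (hφ : Differentiable ℂ φ)
    (k n : ℤ) :
    unitFourierCoeff φ (k + 2 * M * n) = ee ((k * n + M * n ^ 2) * τ) * unitFourierCoeff φ k := by
  rw [unitFourierCoeff_eq_integral_comp_add hφ hell.periodic _ (-n * τ), unitFourierCoeff,
    ← integral_const_mul]
  refine integral_congr fun t _ ↦ ?_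
  have hshift : -n * τ + t = t + ((-n : ℤ) : ℂ) * τ + ((0 : ℤ) : ℂ) := by push_cast; ring
  have hexp : ee (-M * (((-n : ℤ) : ℂ) ^ 2 * τ + 2 * ((-n : ℤ) : ℂ) * t))
      * ee (-((k + 2 * M * n : ℤ) : ℂ) * (t + ((-n : ℤ) : ℂ) * τ + ((0 : ℤ) : ℂ)))
      = ee ((k * n + M * n ^ 2) * τ) * ee (-k * t) := by
    rw [← ee_add, ← ee_add]; congr 1; push_cast; ring
  rw [hshift, hell]
  linear_combination φ t * hexp

lemma fourierCoeff'_mul_theta (hell : IsEllipticOfIndex M τ φ) (hφ : Differentiable ℂ φ)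
    (hM : M ≠ 0) (ℓ : ℤ) (z : ℂ) :
    fourierCoeff' M φ τ ℓ * theta M ℓ z τ
      = ∑' n : ℤ, unitFourierCoeff φ (ℓ + 2 * M * n) * ee ((ℓ + 2 * M * n : ℤ) * z) := by
  rw [theta, ← tsum_mul_left]
  refine tsum_congr fun n ↦ ?_
  have hM' : (M : ℂ) ≠ 0 := Nat.cast_ne_zero.mpr hM
  have hexp : -(ℓ : ℂ) ^ 2 * τ / (4 * M) + ((ℓ + 2 * M * n : ℤ) : ℂ) ^ 2 * τ / (4 * M)
      = (ℓ * n + M * n ^ 2) * τ := by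
    push_cast; field_simp; ring
  have hee : ee (-(ℓ : ℂ) ^ 2 * τ / (4 * M)) * ee (((ℓ + 2 * M * n : ℤ) : ℂ) ^ 2 * τ / (4 * M))
      = ee ((ℓ * n + M * n ^ 2) * τ) := by rw [← ee_add, hexp]
  have hcoeff : fourierCoeff' M φ τ ℓ
      = ee (-(ℓ : ℂ) ^ 2 * τ / (4 * M)) * unitFourierCoeff φ ℓ := rfl
  rw [hell.unitFourierCoeff_add_mul hφ, thetaTerm, hcoeff]
  linear_combination unitFourierCoeff φ ℓ * ee ((ℓ + 2 * M * n : ℤ) * z) * hee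

end IsEllipticOfIndex

theorem stmt11_general (M : ℕ) (hM : 1 ≤ M) (τ : ℂ) (φ : ℂ → ℂ)
    (hφ : Differentiable ℂ φ)
    (hell : ∀ (lam mu : ℤ) (z : ℂ),
      φ (z + (lam : ℂ) * τ + (mu : ℂ))
        = ee (-(M : ℂ) * ((lam : ℂ) ^ 2 * τ + 2 * (lam : ℂ) * z)) * φ z) :
    ∀ z : ℂ, φ z = ∑ ℓ ∈ Finset.range (2 * M), fourierCoeff' M φ τ ℓ * theta M ℓ z τ := by
  intro z
  have hell : IsEllipticOfIndex M τ φ := hell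
  have hexpansion := hasSum_unitFourierCoeff hφ hell.periodic z
  rw [← hexpansion.tsum_eq, hexpansion.summable.tsum_eq_sum_range_tsum_add_mul (m := 2 * M)
    (by omega)]
  refine Finset.sum_congr rfl fun ℓ _ ↦ ?_
  rw [hell.fourierCoeff'_mul_theta hφ (by omega)]
  push_cast
  rfl

/-- Theta decomposition of a holomorphic function satisfying the index `M` elliptic
transformation law: `φ(z;τ) = Σ_{ℓ mod 2M} h_ℓ(τ) θ_{M,ℓ}(z;τ)`. -/
theorem stmt11 (M : ℕ) (hM : 1 ≤ M) (τ : ℂ) (hτ : 0 < τ.im) (φ : ℂ → ℂ)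
    (hφ : Differentiable ℂ φ)
    (hell : ∀ (lam mu : ℤ) (z : ℂ),
      φ (z + (lam : ℂ) * τ + (mu : ℂ))
        = ee (-(M : ℂ) * ((lam : ℂ) ^ 2 * τ + 2 * (lam : ℂ) * z)) * φ z) :
    ∀ z : ℂ, φ z = ∑ ℓ ∈ Finset.range (2 * M), fourierCoeff' M φ τ ℓ * theta M ℓ z τ :=
  stmt11_general M hM τ φ hφ hell
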